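/- If Dᵤa ∈ OT and b is a u-subterm of Dᵤa of order u, then b ⪯ Dᵤa. -/
import Mathlib


inductive PT : Type
  | D : ℕ∞ → List PT → PT

mutual
  def PT.lt : PT → PT → Prop
    | .D u a, .D v b => u < v ∨ (u = v ∧ T.lt a b)
  def T.lt : List PT → List PT → Prop
    | _, [] => False
    | [], _ :: _ => True
    | a :: as, b :: bs => PT.lt a b ∨ (a = b ∧ T.lt as bs)
end

def PT.ord : PT → ℕ∞
  | .D u _ => u

def T.ord : List PT → ℕ∞
  | [] => 0
  | a :: _ => a.ord

mutual
  /-- `G_u` on principal terms. -/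
  def PT.G : ℕ∞ → PT → Set (List PT)
    | u, .D v a => if v < u then ∅ else insert a (T.G u a)
  /-- `G_u` on general terms. -/
  def T.G : ℕ∞ → List PT → Set (List PT)
    | _, [] => ∅
    | u, a :: as => PT.G u a ∪ T.G u as
end

/-- Buchholz's set `OT` of ordinal terms (as a predicate on general terms). -/
inductive OT : List PT → Prop
  | zero : OT []
  | seq (l : List PT) : 2 ≤ l.length → (∀ p ∈ l, OT [p]) →
      l.Chain' (fun x y => PT.lt y x ∨ y = x) → OT l
  | D (u : ℕ∞) (a : List PT) : OT a → (∀ b ∈ T.G u a, T.lt b a) → OT [.D u a]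

mutual
  /-- The `u`-subterms of a principal term. -/
  def PT.sub : ℕ∞ → PT → Set (List PT)
    | u, .D v a => if v < u then {[.D v a]} else insert [.D v a] (T.subU u a)
  /-- The union of the sets of `u`-subterms of the entries of a list. -/
  def T.subU : ℕ∞ → List PT → Set (List PT)
    | _, [] => ∅
    | u, a :: as => PT.sub u a ∪ T.subU u as
end

/-- The `u`-subterms of a general term. -/
def T.sub (u : ℕ∞) (l : List PT) : Set (List PT) :=
  match l with
  | [] => {[]}
  | [p] => PT.sub u p
  | l => insert l (T.subU u l)

mutual
  theorem PT.sub_shape (u : ℕ∞) (p : PT) (b : List PT) (hb : b ∈ PT.sub u p) :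
      ∃ v c, b = [.D v c] := by
    obtain ⟨w, x⟩ := p
    unfold PT.sub at hb
    split at hb
    · exact ⟨w, x, hb⟩
    · rcases hb with hb | hb
      · exact ⟨w, x, hb⟩
      · exact T.subU_shape u x b hb
  theorem T.subU_shape (u : ℕ∞) (a : List PT) (b : List PT) (hb : b ∈ T.subU u a) :
      ∃ v c, b = [.D v c] := by
    match a with
    | [] => exact absurd hb (by simp [T.subU])
    | p :: as =>
      unfold T.subU at hb
      rcases hb with hb | hb
      · exact PT.sub_shape u p b hb
      · exact T.subU_shape u as b hb
end

mutual
  theorem PT.sub_mem_G (u v : ℕ∞) (c : List PT) (p : PT)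
      (hb : [.D v c] ∈ PT.sub u p) (hv : ¬ v < u) : c ∈ PT.G u p := by
    obtain ⟨w, x⟩ := p
    unfold PT.sub at hb
    unfold PT.G
    split at hb
    · rename_i hw
      simp only [Set.mem_singleton_iff, List.cons.injEq, PT.D.injEq] at hb
      exact absurd (hb.1.1 ▸ hw) hv
    · rename_i hw
      rw [if_neg hw]
      rcases hb with hb | hb
      · simp only [List.cons.injEq, PT.D.injEq] at hb
        exact hb.1.2 ▸ Set.mem_insert _ _
      · exact Set.mem_insert_of_mem _ (T.subU_mem_G u v c x hb hv)
  theorem T.subU_mem_G (u v : ℕ∞) (c : List PT) (a : List PT)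
      (hb : [.D v c] ∈ T.subU u a) (hv : ¬ v < u) : c ∈ T.G u a := by
    match a with
    | [] => exact absurd hb (by simp [T.subU])
    | p :: as =>
      unfold T.subU at hb
      unfold T.G
      rcases hb with hb | hb
      · exact Or.inl (PT.sub_mem_G u v c p hb hv)
      · exact Or.inr (T.subU_mem_G u v c as hb hv)
end

/-- If `Dᵤa ∈ OT` and `b` is a `u`-subterm of `Dᵤa` of order `u`, then `b ⪯ Dᵤa`. -/
theorem usubterm_le (u : ℕ∞) (a : List PT) (h : OT [.D u a]) (b : List PT)
    (hb : b ∈ T.sub u [.D u a]) (hord : T.ord b = u) :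
    T.lt b [.D u a] ∨ b = [.D u a] := by
  have hG : ∀ c ∈ T.G u a, T.lt c a := by
    cases h with
    | seq l h2 => simp at h2
    | D _ _ _ hG => exact hG
  simp only [T.sub, PT.sub, lt_self_iff_false, if_neg (lt_irrefl u)] at hb
  rcases hb with hb | hb
  · exact Or.inr hb
  · obtain ⟨v, c, rfl⟩ := T.subU_shape u a _ hb
    have hv : v = u := hord
    subst hv
    left
    have := hG c (T.subU_mem_G v v c a hb (lt_irrefl v))
    exact Or.inl (Or.inr ⟨rfl, this⟩)
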